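/- arXiv:2402.05848 — 2 statements merged into one kernel-verified Lean document; each statement's English description precedes it below -/
import Mathlib

section
/- Let q ≥ 5 be a prime power. For every simplex point P in F^(q+1), the hyperplane H(P) contains a simplex point Q which is distinct from P and non-collinear to P. -/
open Submodule Module

/-- All columns of the 2×n matrix with rows `x` and `y` are nonzero and pairwise
non-proportional (equivalently, every 2×2 minor is nonzero). -/
def GoodPair {F : Type} [Field F] {n : ℕ} (x y : Fin n → F) : Prop :=
  ∀ i j : Fin n, i ≠ j → x i * y j ≠ x j * y i

/-- A simplex line: a 2-dimensional subspace spanned by the rows of a generator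
matrix all of whose columns are nonzero and pairwise non-proportional. -/
def IsSimplexLine {F : Type} [Field F] {n : ℕ} (C : Submodule F (Fin n → F)) : Prop :=
  ∃ x y : Fin n → F, GoodPair x y ∧ C = span F {x, y}

/-- A simplex point: a 1-dimensional subspace spanned by a vector with exactly
one zero coordinate. -/
def IsSimplexPoint {F : Type} [Field F] {n : ℕ} (P : Submodule F (Fin n → F)) : Prop :=
  ∃ x : Fin n → F, (∃! i, x i = 0) ∧ P = span F {x}

/-- Two simplex points are collinear: they are spanned by the two rows of a
generator matrix of a simplex code, i.e. there is a simplex line containing both. -/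
def PtCollinear {F : Type} [Field F] {n : ℕ} (P Q : Submodule F (Fin n → F)) : Prop :=
  ∃ x y : Fin n → F, GoodPair x y ∧ P = span F {x} ∧ Q = span F {y}

/-- A clique of the graph Γ of simplex lines: all members are simplex lines and
any two distinct members intersect in a 1-dimensional subspace. -/
def IsGammaClique {F : Type} [Field F] {n : ℕ} (T : Set (Submodule F (Fin n → F))) : Prop :=
  (∀ L ∈ T, IsSimplexLine L) ∧
    ∀ L ∈ T, ∀ L' ∈ T, L ≠ L' → finrank F ↥(L ⊓ L') = 1

/-- A top of Γ: a maximal clique of Γ consisting of all simplex lines contained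
in a fixed 3-dimensional subspace (projective plane). -/
def IsGammaTop {F : Type} [Field F] {n : ℕ} (T : Set (Submodule F (Fin n → F))) : Prop :=
  IsGammaClique T ∧ (∀ T' : Set (Submodule F (Fin n → F)), IsGammaClique T' → T ⊆ T' → T' = T) ∧
    ∃ W : Submodule F (Fin n → F), finrank F ↥W = 3 ∧
      T = {L | IsSimplexLine L ∧ L ≤ W}

/-- A monomial linear automorphism: `x ↦ (a₁ x_{σ(1)}, …, aₙ x_{σ(n)})` with all
`aᵢ` nonzero and `σ` a permutation. -/
def IsMonomial {F : Type} [Field F] {n : ℕ} (l : (Fin n → F) ≃ₗ[F] (Fin n → F)) : Prop :=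
  ∃ (a : Fin n → F) (σ : Equiv.Perm (Fin n)),
    (∀ i, a i ≠ 0) ∧ ∀ (x : Fin n → F) (i : Fin n), l x i = a i * x (σ i)

/-- Coordinatewise inversion `I` (with `0⁻¹ = 0`). -/
def vecInv {F : Type} [Field F] {n : ℕ} (x : Fin n → F) : Fin n → F := fun i => (x i)⁻¹

/-! Rescale the coordinates of `x` by `c = 1 + a (e_j - e_k)` with `j, k` two nonzero positions
and `a ∉ {0, ±1}`. Then `y = c * x` keeps the single zero coordinate `i₀` of `x`, so column `i₀`
of the matrix with rows `x, y` vanishes and `⟨x⟩, ⟨y⟩` are not collinear; a third nonzero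
position, where `c = 1 ≠ 1 + a`, separates `⟨y⟩` from `⟨x⟩`; and `I(x) · y` is the sum of `c`
over the `q` nonzero positions of `x`, which is `q = 0` in `F`. -/

section Scaling

variable {F : Type} [Field F] {ι : Type} {x c : ι → F}

theorem existsUnique_mul_eq_zero (hx : ∃! i, x i = 0) (hc : ∀ i, c i ≠ 0) :
    ∃! i, (c * x) i = 0 := by
  simpa only [Pi.mul_apply, mul_eq_zero, hc, false_or] using hx

theorem span_singleton_mul_ne {j m : ι} (hxj : x j ≠ 0) (hxm : x m ≠ 0) (hcjm : c j ≠ c m) :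
    span F {c * x} ≠ span F {x} := by
  intro h
  obtain ⟨t, ht⟩ := mem_span_singleton.mp (h ▸ mem_span_singleton_self (c * x))
  have hcoord (i : ι) (hxi : x i ≠ 0) : c i = t :=
    (mul_right_cancel₀ hxi (congrFun ht i)).symm
  exact hcjm ((hcoord j hxj).trans (hcoord m hxm).symm)

theorem sum_inv_mul_mul_eq_sum_compl [Fintype ι] [DecidableEq ι] {i₀ : ι}
    (hx : x i₀ = 0) (hx' : ∀ i, i ≠ i₀ → x i ≠ 0) :
    ∑ i, (x i)⁻¹ * (c * x) i = ∑ i ∈ {i₀}ᶜ, c i := by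
  rw [Fintype.sum_eq_add_sum_compl i₀, Pi.mul_apply, hx, mul_zero, mul_zero, zero_add]
  refine Finset.sum_congr rfl fun i hi => ?_
  have hxi := hx' i (by simpa using hi)
  rw [Pi.mul_apply, mul_left_comm, inv_mul_cancel₀ hxi, mul_one]

end Scaling

theorem not_ptCollinear_of_eq_zero {F : Type} [Field F] {n : ℕ} {x y : Fin n → F}
    {i j : Fin n} (hij : i ≠ j) (hx : x i = 0) (hy : y i = 0) :
    ¬ PtCollinear (span F {x}) (span F {y}) := by
  rintro ⟨x', y', hgood, hPx, hPy⟩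
  obtain ⟨s, rfl⟩ := mem_span_singleton.mp (hPx ▸ mem_span_singleton_self x')
  obtain ⟨t, rfl⟩ := mem_span_singleton.mp (hPy ▸ mem_span_singleton_self y')
  exact hgood i j hij (by simp [hx, hy])

theorem sum_one_add_smul_single_sub_single {F : Type} [Field F] {ι : Type} [DecidableEq ι]
    {s : Finset ι} {j k : ι} (hj : j ∈ s) (hk : k ∈ s) (a : F) :
    ∑ i ∈ s, (1 + a • (Pi.single j 1 - Pi.single k 1) : ι → F) i = s.card := by
  simp [Finset.sum_add_distrib, Finset.sum_sub_distrib, ← Finset.mul_sum, hj, hk]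

theorem exists_ne_zero_one_add_ne_zero_one_sub_ne_zero {F : Type} [Field F] [Fintype F]
    (hF : 3 < Fintype.card F) : ∃ a : F, a ≠ 0 ∧ 1 + a ≠ 0 ∧ 1 - a ≠ 0 := by
  classical
  obtain ⟨a, -, ha⟩ := Finset.exists_mem_notMem_of_card_lt_card
    (s := {0, -1, 1}) (t := Finset.univ) (Finset.card_le_three.trans_lt hF)
  simp only [Finset.mem_insert, Finset.mem_singleton, not_or] at ha
  obtain ⟨ha0, ha_neg, ha1⟩ := ha
  refine ⟨a, ha0, fun h => ha_neg ?_, fun h => ha1 ?_⟩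
  · linear_combination h
  · linear_combination -h

/-- For q ≥ 5 and every simplex point P = ⟨x⟩, the hyperplane H(P) contains a
simplex point Q distinct from P and non-collinear to P. -/
theorem hyperplane_contains_noncollinear_point (F : Type) [Field F] [Fintype F]
    (hq : 5 ≤ Fintype.card F)
    (x : Fin (Fintype.card F + 1) → F) (hx : ∃! i, x i = 0) :
    ∃ y : Fin (Fintype.card F + 1) → F, (∃! i, y i = 0) ∧
      span F {y} ≠ span F {x} ∧
      ¬ PtCollinear (span F {x}) (span F {y}) ∧
      ∑ i, (x i)⁻¹ * y i = 0 := by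
  classical
  obtain ⟨i₀, hxi₀, hx_uniq⟩ := hx
  have hx' : ∀ i, i ≠ i₀ → x i ≠ 0 := fun i hi h => hi (hx_uniq i h)
  obtain ⟨a, ha, ha_add, ha_sub⟩ :=
    exists_ne_zero_one_add_ne_zero_one_sub_ne_zero (F := F) (by omega)
  obtain ⟨j, hj, k, hk, m, hm, hjk, hjm, hkm⟩ :=
    (Finset.two_lt_card (s := {i₀}ᶜ)).mp <| by
      rw [Finset.card_compl, Finset.card_singleton, Fintype.card_fin]; omega
  simp only [Finset.mem_compl, Finset.mem_singleton] at hj hk hm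
  set c : Fin (Fintype.card F + 1) → F := 1 + a • (Pi.single j 1 - Pi.single k 1)
  have hc : ∀ i, c i ≠ 0 := by
    intro i
    by_cases hij : i = j
    · subst hij; simpa [c, hjk] using ha_add
    by_cases hik : i = k
    · subst hik; simpa [c, hij, ← sub_eq_add_neg] using ha_sub
    · simp [c, hij, hik]
  have hcjm : c j ≠ c m := by simpa [c, hjk, hjm, Ne.symm hjm, Ne.symm hkm] using ha
  refine ⟨c * x, existsUnique_mul_eq_zero ⟨i₀, hxi₀, hx_uniq⟩ hc,
    span_singleton_mul_ne (hx' j hj) (hx' m hm) hcjm,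
    not_ptCollinear_of_eq_zero (Ne.symm hj) hxi₀ (by simp [hxi₀]), ?_⟩
  rw [sum_inv_mul_mul_eq_sum_compl hxi₀ hx',
    sum_one_add_smul_single_sub_single (by simpa) (by simpa),
    Finset.card_compl, Finset.card_singleton, Fintype.card_fin, add_tsub_cancel_right,
    FiniteField.cast_card_eq_zero]
end

section
/- Let q = 7 and identify F with Z/7Z. Let x = (0,1,1,1,1,1,1,1), y = (1,0,1,3,2,6,4,5), z′ = (1,2,6,1,4,3,5,0) in F^8, and set P = ⟨x⟩, Q = ⟨y⟩, T′ = ⟨z′⟩. Then P and Q are collinear simplex points, T′ is a simplex point collinear to both P and Q, T′ does not lie on the line ⟨P,Q⟩, and T′ does not belong to I(⟨I(P), I(Q)⟩) (the image under the inversion I of the set of 1-dimensional subspaces of the simplex line through I(P) and I(Q)). In particular, for q = 7 the set I(⟨I(P), I(Q)⟩) \ {P,Q} is not the full set of simplex points collinear to both P and Q and off the line ⟨P,Q⟩. -/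
/-!
The inversion `I` is an involution satisfying `I (c • v) = c⁻¹ • I v`, so `⟨z′⟩ = ⟨I w⟩` with
`w ∈ ⟨I x, I y⟩` forces `I z′ ∈ ⟨I x, I y⟩`. Computing the inverses in `𝔽₇`, both this and
`z′ ∈ ⟨x, y⟩` fail: coordinates 0 and 1 determine the coefficients, and coordinate 2 then
disagrees. The remaining claims are finite checks on the coordinates.
-/

open Submodule Module

instance : Fact (Nat.Prime 7) := ⟨by norm_num⟩

/-- The row vector x = (0,1,1,1,1,1,1,1) over F₇. -/
def xv : Fin 8 → ZMod 7 := ![0, 1, 1, 1, 1, 1, 1, 1]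

/-- The row vector y = (1,0,1,3,2,6,4,5) over F₇. -/
def yv : Fin 8 → ZMod 7 := ![1, 0, 1, 3, 2, 6, 4, 5]

/-- The row vector z′ = (1,2,6,1,4,3,5,0) over F₇. -/
def zv : Fin 8 → ZMod 7 := ![1, 2, 6, 1, 4, 3, 5, 0]

section

variable {F : Type} [Field F] {n : ℕ}

instance [DecidableEq F] (x y : Fin n → F) : Decidable (GoodPair x y) :=
  inferInstanceAs (Decidable (∀ i j : Fin n, i ≠ j → x i * y j ≠ x j * y i))

theorem isSimplexPoint_span_singleton {x : Fin n → F} (i : Fin n) (hi : x i = 0)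
    (h : ∀ j ≠ i, x j ≠ 0) : IsSimplexPoint (span F {x}) :=
  ⟨x, ⟨i, hi, fun j hj => by_contra fun hji => h j hji hj⟩, rfl⟩

@[simp]
theorem vecInv_vecInv (x : Fin n → F) : vecInv (vecInv x) = x :=
  funext fun i => inv_inv (x i)

theorem vecInv_smul (c : F) (x : Fin n → F) : vecInv (c • x) = c⁻¹ • vecInv x :=
  funext fun i => mul_inv c (x i)

theorem vecInv_eq_of_mul_eq_one {x y : Fin n → F}
    (h : ∀ i, x i * y i = 1 ∨ x i = 0 ∧ y i = 0) : vecInv x = y := by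
  funext i
  rcases h i with h | ⟨hx, hy⟩
  · exact inv_eq_of_mul_eq_one_right h
  · simp [vecInv, hx, hy]

theorem vecInv_mem_of_span_singleton_eq {L : Submodule F (Fin n → F)} {w z : Fin n → F}
    (hw : w ∈ L) (h : span F {vecInv w} = span F {z}) : vecInv z ∈ L := by
  obtain ⟨u, rfl⟩ := span_singleton_eq_span_singleton.mp h
  rw [Units.smul_def, vecInv_smul, vecInv_vecInv]
  exact L.smul_mem _ hw

end

/-- For q = 7: with P = ⟨x⟩, Q = ⟨y⟩, T′ = ⟨z′⟩ as above, P and Q are collinear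
simplex points, T′ is a simplex point collinear to both P and Q, T′ is not on the
line ⟨P,Q⟩, and T′ does not belong to I(⟨I(P),I(Q)⟩); so for q = 7 the set
I(⟨I(P),I(Q)⟩) \ {P,Q} is not the full set of simplex points collinear to both
P, Q and off the line ⟨P,Q⟩. -/
theorem q7_counterexample :
    IsSimplexPoint (span (ZMod 7) {xv}) ∧ IsSimplexPoint (span (ZMod 7) {yv}) ∧
    PtCollinear (span (ZMod 7) {xv}) (span (ZMod 7) {yv}) ∧
    IsSimplexPoint (span (ZMod 7) {zv}) ∧
    PtCollinear (span (ZMod 7) {zv}) (span (ZMod 7) {xv}) ∧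
    PtCollinear (span (ZMod 7) {zv}) (span (ZMod 7) {yv}) ∧
    ¬ span (ZMod 7) {zv} ≤ span (ZMod 7) {xv, yv} ∧
    span (ZMod 7) {zv} ∉
      {R : Submodule (ZMod 7) (Fin 8 → ZMod 7) |
        ∃ w : Fin 8 → ZMod 7, w ≠ 0 ∧ w ∈ span (ZMod 7) {vecInv xv, vecInv yv} ∧
          R = span (ZMod 7) {vecInv w}} := by
  have hIx : vecInv xv = xv := vecInv_eq_of_mul_eq_one (by decide)
  have hIy : vecInv yv = ![1, 0, 1, 5, 4, 6, 2, 3] := vecInv_eq_of_mul_eq_one (by decide)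
  have hIz : vecInv zv = ![1, 4, 6, 1, 2, 5, 3, 0] := vecInv_eq_of_mul_eq_one (by decide)
  refine ⟨isSimplexPoint_span_singleton 0 rfl (by decide),
    isSimplexPoint_span_singleton 1 rfl (by decide), ⟨xv, yv, by decide, rfl, rfl⟩,
    isSimplexPoint_span_singleton 7 rfl (by decide), ⟨zv, xv, by decide, rfl, rfl⟩,
    ⟨zv, yv, by decide, rfl, rfl⟩, ?_, ?_⟩
  · rw [span_singleton_le_iff_mem, mem_span_pair]
    decide
  · rintro ⟨w, -, hw, hR⟩
    have hz := vecInv_mem_of_span_singleton_eq hw hR.symm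
    rw [hIx, hIy, hIz, mem_span_pair] at hz
    revert hz
    decide
end
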